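/- arXiv:1701.03062 — 2 statements merged into one kernel-verified Lean document; each statement's English description precedes it below -/
import Mathlib

section
/- In the halfer variant of the Sleeping Beauty game, for every p, q ∈ [0,1], Eloise's winning probability equals 1/2: under the measure μ_q on Bool × Bool, with an independent guess g satisfying P(g = Heads) = p, the probability of the event ((x = Heads ∧ t = Tuesday) ∨ g = x) is exactly 1/2, independent of both p and q. -/
def Heads : Bool := true
def Tails : Bool := false
def Monday : Bool := false
def Tuesday : Bool := true

/-- The halfer-variant joint measure `μ_q` on the coin `x` and the day `t`:
`(Heads, Monday) ↦ 1/2`, `(Heads, Tuesday) ↦ 0`, `(Tails, Monday) ↦ q/2`,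
`(Tails, Tuesday) ↦ (1 - q)/2`. -/
noncomputable def base (q : ℝ) (ω : Bool × Bool) : ℝ :=
  if ω.1 = Heads then (if ω.2 = Tuesday then 0 else 1/2)
  else (if ω.2 = Tuesday then (1 - q)/2 else q/2)

/-- Joint weight of `ω = (x, t, g)`, where the guess `g` is independent with
`P(g = Heads) = p`. -/
noncomputable def w (p q : ℝ) (ω : Bool × Bool × Bool) : ℝ :=
  base q (ω.1, ω.2.1) * (if ω.2.2 = Heads then p else 1 - p)

/-- Probability of an event under `μ_q` together with the independent guess. -/
noncomputable def Pr (p q : ℝ) (E : Set (Bool × Bool × Bool)) : ℝ :=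
  ∑ ω : Bool × Bool × Bool, E.indicator (w p q) ω

/-- Eloise wins if Beauty is not awake (`x = Heads ∧ t = Tuesday`) or her guess is
correct (`g = x`). -/
def ElWins : Set (Bool × Bool × Bool) :=
  {ω | (ω.1 = Heads ∧ ω.2.1 = Tuesday) ∨ ω.2.2 = ω.1}

theorem halfer_variant_value :
    ∀ p ∈ Set.Icc (0:ℝ) 1, ∀ q ∈ Set.Icc (0:ℝ) 1, Pr p q ElWins = 1/2 := by
  intro p _ q _
  simp [Pr, Fintype.sum_prod_type, Set.indicator, ElWins, w, base, Heads, Tails, Monday, Tuesday]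
  ring
end

section
/- Under the measure μ_q on Bool × Bool with q ∈ [0,1], the conditional probability μ_q(x = Heads | t = Monday) equals 1/(1 + q), and with an independent guess g satisfying P(g = Heads) = p, the conditional winning probability μ_q(g = x | t = Monday) equals (p + (1 − p)q)/(1 + q). In particular: if q = 1 the conditional probability of Heads given Monday is 1/2; if q = 1/2 it is 2/3; and if q = 0 it is 1. -/
/-- Probability of an event under `μ_q`. -/
noncomputable def Pr2 (q : ℝ) (E : Set (Bool × Bool)) : ℝ :=
  ∑ ω : Bool × Bool, E.indicator (base q) ω

/-- Conditional probability under `μ_q`. -/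
noncomputable def condPr2 (q : ℝ) (A B : Set (Bool × Bool)) : ℝ :=
  Pr2 q (A ∩ B) / Pr2 q B

/-- Conditional probability under `μ_q` together with the independent guess. -/
noncomputable def condPr (p q : ℝ) (A B : Set (Bool × Bool × Bool)) : ℝ :=
  Pr p q (A ∩ B) / Pr p q B

theorem halfer_variant_monday (p q : ℝ) (hp : p ∈ Set.Icc (0:ℝ) 1)
    (hq : q ∈ Set.Icc (0:ℝ) 1) :
    condPr2 q {ω | ω.1 = Heads} {ω | ω.2 = Monday} = 1 / (1 + q) ∧
    condPr p q {ω | ω.2.2 = ω.1} {ω | ω.2.1 = Monday} = (p + (1 - p) * q) / (1 + q) ∧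
    -- particular cases of the conditional probability of Heads given Monday
    condPr2 1 {ω | ω.1 = Heads} {ω | ω.2 = Monday} = 1/2 ∧
    condPr2 (1/2) {ω | ω.1 = Heads} {ω | ω.2 = Monday} = 2/3 ∧
    condPr2 0 {ω | ω.1 = Heads} {ω | ω.2 = Monday} = 1 := by
  obtain ⟨hq0, hq1⟩ := hq
  have h1 : (1:ℝ) + q ≠ 0 := by linarith
  have key : ∀ q' : ℝ, condPr2 q' {ω | ω.1 = Heads} {ω | ω.2 = Monday}
      = (1/2) / (1/2 + q'/2) := by
    intro q'
    simp [condPr2, Pr2, Fintype.sum_prod_type, Set.indicator, base, Heads, Tails,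
      Monday, Tuesday]
  refine ⟨?_, ?_, ?_, ?_, ?_⟩
  · rw [key]; field_simp
  · simp only [condPr, Pr, Fintype.sum_prod_type, Set.indicator, w, base, Heads, Tails,
      Monday, Tuesday]
    norm_num
    rw [div_eq_div_iff (by linarith) h1]
    ring
  · rw [key]; norm_num
  · rw [key]; norm_num
  · rw [key]; norm_num
end
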